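/- arXiv:1103.3198 — 3 statements merged into one kernel-verified Lean document; each statement's English description precedes it below -/
import Mathlib

section
/- Let $(F,G)$ be a pair of smooth compactly supported functions on a symplectic manifold $M$. For $s \geq 0$ let $\mathcal{K}_s$ be the set of pairs $(H,K)$ of smooth compactly supported functions with $\|\{H,K\}\|_\infty \leq s$, and let $\rho_{F,G}(s) = \inf_{(H,K) \in \mathcal{K}_s}(\|F-H\|_\infty + \|G-K\|_\infty)$ be the profile function. Then the function $s \mapsto s\,\rho_{F,G}(s)$ is Lipschitz on $(0, +\infty)$ with Lipschitz constant $3\min(\|F\|_\infty, \|G\|_\infty)$. In particular $\rho_{F,G}$ is continuous on $(0,+\infty)$. -/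
open Set

/-- The sup-norm (uniform norm) `‖f‖_∞ = sup_{x ∈ M} |f(x)|` of a function. -/
noncomputable def supNorm {M : Type*} (f : M → ℝ) : ℝ := ⨆ x, |f x|

/-- An abstract model of a symplectic manifold `M`, recording the predicate of being a
smooth function on `M` and the Poisson bracket `{·,·}` on smooth functions, together with
its basic algebraic properties (ℝ-bilinearity, antisymmetry, and the Leibniz rule). -/
structure PoissonManifold (M : Type*) [TopologicalSpace M] where
  /-- `IsSmooth f` means `f ∈ C^∞(M)`. -/
  IsSmooth : (M → ℝ) → Prop
  /-- The Poisson bracket `{f, g}` associated to the symplectic form. -/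
  bracket : (M → ℝ) → (M → ℝ) → M → ℝ
  isSmooth_continuous : ∀ {f}, IsSmooth f → Continuous f
  isSmooth_const : ∀ c : ℝ, IsSmooth (fun _ => c)
  isSmooth_add : ∀ {f g}, IsSmooth f → IsSmooth g → IsSmooth (f + g)
  isSmooth_mul : ∀ {f g}, IsSmooth f → IsSmooth g → IsSmooth (f * g)
  isSmooth_smul : ∀ (c : ℝ) {f}, IsSmooth f → IsSmooth (c • f)
  isSmooth_bracket : ∀ {f g}, IsSmooth f → IsSmooth g → IsSmooth (bracket f g)
  bracket_add_left : ∀ f g h, bracket (f + g) h = bracket f h + bracket g h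
  bracket_smul_left : ∀ (c : ℝ) f g, bracket (c • f) g = c • bracket f g
  bracket_antisymm : ∀ f g, bracket f g = - bracket g f
  bracket_leibniz : ∀ f g h, bracket (f * g) h = f * bracket g h + g * bracket f h

/-- The set `𝒦_s` of pairs of smooth compactly supported functions `(H,K)` with
`‖{H,K}‖_∞ ≤ s`, as a predicate. -/
def inKs {M : Type*} [TopologicalSpace M] (P : PoissonManifold M) (s : ℝ)
    (H K : M → ℝ) : Prop :=
  P.IsSmooth H ∧ HasCompactSupport H ∧ P.IsSmooth K ∧ HasCompactSupport K ∧
    supNorm (P.bracket H K) ≤ s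

/-- The profile function `ρ_{F,G}(s) = dist((F,G), 𝒦_s)` in the uniform distance
`d((F,G),(H,K)) = ‖F-H‖_∞ + ‖G-K‖_∞`. -/
noncomputable def profileFn {M : Type*} [TopologicalSpace M] (P : PoissonManifold M)
    (F G : M → ℝ) (s : ℝ) : ℝ :=
  sInf {d : ℝ | ∃ H K : M → ℝ, inKs P s H K ∧ d = supNorm (F - H) + supNorm (G - K)}

/-! Scaling the first function of a competitor `(H, K) ∈ 𝒦_s` by `c = t / s ≤ 1` gives a
competitor in `𝒦_t`, and `F - c • H = (1 - c) • F + c • (F - H)`; hence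
`ρ(t) ≤ ρ(s) + (1 - t / s) ‖F‖`, which after multiplying by `t` gives
`t ρ(t) ≤ s ρ(s) + (s - t) ‖F‖`, and the same holds with `‖G‖` since `{K, H} = -{H, K}`.
Conversely `ρ` is antitone and `ρ ≤ min ‖F‖ ‖G‖` (competitors `(0, G)` and `(F, 0)`), so
`s ρ(s) ≤ s ρ(t) ≤ t ρ(t) + (s - t) min ‖F‖ ‖G‖` for `t ≤ s`. Thus `s ↦ s ρ(s)` is in fact
`min ‖F‖ ‖G‖`-Lipschitz. -/

section SupNorm

variable {M : Type*}

lemma supNorm_nonneg (f : M → ℝ) : 0 ≤ supNorm f :=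
  Real.iSup_nonneg fun _ => abs_nonneg _

lemma abs_le_supNorm {f : M → ℝ} (hf : BddAbove (range fun x => |f x|)) (x : M) :
    |f x| ≤ supNorm f :=
  le_ciSup hf x

lemma supNorm_le {f : M → ℝ} {C : ℝ} (hC : 0 ≤ C) (h : ∀ x, |f x| ≤ C) : supNorm f ≤ C :=
  Real.iSup_le h hC

@[simp]
lemma supNorm_zero : supNorm (0 : M → ℝ) = 0 := by
  simp [supNorm]

@[simp]
lemma supNorm_neg (f : M → ℝ) : supNorm (-f) = supNorm f := by
  simp [supNorm]

lemma supNorm_smul (c : ℝ) (f : M → ℝ) : supNorm (c • f) = |c| * supNorm f := by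
  simp only [supNorm, Real.mul_iSup_of_nonneg (abs_nonneg c), Pi.smul_apply, smul_eq_mul, abs_mul]

lemma supNorm_sub_smul_le {f g : M → ℝ} (hf : BddAbove (range fun x => |f x|))
    (hfg : BddAbove (range fun x => |(f - g) x|)) {c : ℝ} (hc₀ : 0 ≤ c) (hc₁ : c ≤ 1) :
    supNorm (f - c • g) ≤ (1 - c) * supNorm f + c * supNorm (f - g) := by
  refine supNorm_le (by have := supNorm_nonneg f; have := supNorm_nonneg (f - g); positivity)
    fun x => ?_
  calc |(f - c • g) x| = |(1 - c) * f x + c * (f - g) x| := by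
        simp only [Pi.sub_apply, Pi.smul_apply, smul_eq_mul]; ring_nf
    _ ≤ (1 - c) * |f x| + c * |(f - g) x| := by
        refine (abs_add_le _ _).trans_eq ?_
        rw [abs_mul, abs_mul, abs_of_nonneg (sub_nonneg.2 hc₁), abs_of_nonneg hc₀]
    _ ≤ (1 - c) * supNorm f + c * supNorm (f - g) := by
        have := sub_nonneg.2 hc₁
        gcongr
        exacts [abs_le_supNorm hf x, abs_le_supNorm hfg x]

lemma bddAbove_range_abs_of_hasCompactSupport [TopologicalSpace M] {f : M → ℝ}
    (hf : Continuous f) (hfc : HasCompactSupport f) : BddAbove (range fun x => |f x|) := by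
  obtain ⟨C, hC⟩ := hf.bounded_above_of_compact_support hfc
  exact ⟨C, by rintro _ ⟨x, rfl⟩; exact hC x⟩

end SupNorm

section Profile

variable {M : Type*} [TopologicalSpace M] {P : PoissonManifold M}

variable (P) in
lemma PoissonManifold.bracket_zero_left (K : M → ℝ) : P.bracket 0 K = 0 := by
  simpa using P.bracket_smul_left 0 0 K

variable {F G H K : M → ℝ} {s t : ℝ}

lemma inKs_comm : inKs P s H K ↔ inKs P s K H := by
  have key : ∀ {H K : M → ℝ}, inKs P s H K → inKs P s K H :=
    fun ⟨hH, hHc, hK, hKc, hb⟩ => ⟨hK, hKc, hH, hHc, by rwa [P.bracket_antisymm, supNorm_neg]⟩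
  exact ⟨key, key⟩

lemma inKs_zero_left (hs : 0 ≤ s) (hK : P.IsSmooth K) (hKc : HasCompactSupport K) :
    inKs P s 0 K :=
  ⟨P.isSmooth_const 0, .zero, hK, hKc, by rwa [P.bracket_zero_left, supNorm_zero]⟩

lemma inKs.mono (h : inKs P s H K) (hst : s ≤ t) : inKs P t H K :=
  ⟨h.1, h.2.1, h.2.2.1, h.2.2.2.1, h.2.2.2.2.trans hst⟩

lemma inKs.smul_left (h : inKs P s H K) {c : ℝ} (hc : 0 ≤ c) : inKs P (c * s) (c • H) K := by
  obtain ⟨hH, hHc, hK, hKc, hb⟩ := h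
  refine ⟨P.isSmooth_smul c hH, hHc.smul_left, hK, hKc, ?_⟩
  rw [P.bracket_smul_left, supNorm_smul, abs_of_nonneg hc]
  exact mul_le_mul_of_nonneg_left hb hc

lemma profileFn_nonneg (s : ℝ) : 0 ≤ profileFn P F G s :=
  Real.sInf_nonneg fun _ ⟨_, _, _, hd⟩ => hd ▸ add_nonneg (supNorm_nonneg _) (supNorm_nonneg _)

lemma profileFn_le_of_inKs (h : inKs P s H K) :
    profileFn P F G s ≤ supNorm (F - H) + supNorm (G - K) :=
  csInf_le ⟨0, fun _ ⟨_, _, _, hd⟩ => hd ▸ add_nonneg (supNorm_nonneg _) (supNorm_nonneg _)⟩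
    ⟨H, K, h, rfl⟩

lemma le_profileFn_of_forall_inKs {c : ℝ} {H₀ K₀ : M → ℝ} (h₀ : inKs P s H₀ K₀)
    (h : ∀ H K, inKs P s H K → c ≤ supNorm (F - H) + supNorm (G - K)) :
    c ≤ profileFn P F G s :=
  le_csInf ⟨_, H₀, K₀, h₀, rfl⟩ fun _ ⟨H, K, hHK, hd⟩ => hd ▸ h H K hHK

variable (P F G) in
lemma profileFn_comm (s : ℝ) : profileFn P F G s = profileFn P G F s := by
  unfold profileFn
  congr 1
  ext d
  constructor <;>
  · rintro ⟨H, K, h, rfl⟩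
    exact ⟨K, H, inKs_comm.1 h, add_comm _ _⟩

lemma profileFn_le_supNorm_left (hs : 0 ≤ s) (hG : P.IsSmooth G) (hGc : HasCompactSupport G) :
    profileFn P F G s ≤ supNorm F := by
  simpa using profileFn_le_of_inKs (F := F) (G := G) (inKs_zero_left hs hG hGc)

lemma profileFn_le_min (hs : 0 ≤ s) (hF : P.IsSmooth F) (hFc : HasCompactSupport F)
    (hG : P.IsSmooth G) (hGc : HasCompactSupport G) :
    profileFn P F G s ≤ min (supNorm F) (supNorm G) :=
  le_min (profileFn_le_supNorm_left hs hG hGc)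
    (profileFn_comm P F G s ▸ profileFn_le_supNorm_left hs hF hFc)

lemma profileFn_anti (hs : 0 ≤ s) (hst : s ≤ t) (hF : P.IsSmooth F) (hFc : HasCompactSupport F) :
    profileFn P F G t ≤ profileFn P F G s :=
  le_profileFn_of_forall_inKs (inKs_comm.1 (inKs_zero_left hs hF hFc))
    fun _ _ h => profileFn_le_of_inKs (h.mono hst)

lemma profileFn_mul_le (hs : 0 ≤ s) {c : ℝ} (hc₀ : 0 ≤ c) (hc₁ : c ≤ 1)
    (hF : P.IsSmooth F) (hFc : HasCompactSupport F) :
    profileFn P F G (c * s) ≤ profileFn P F G s + (1 - c) * supNorm F := by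
  rw [← sub_le_iff_le_add]
  refine le_profileFn_of_forall_inKs (inKs_comm.1 (inKs_zero_left hs hF hFc)) fun H K h => ?_
  have hFcont := P.isSmooth_continuous hF
  have hFH := bddAbove_range_abs_of_hasCompactSupport (hFcont.sub (P.isSmooth_continuous h.1))
    (hFc.sub h.2.1)
  have := supNorm_sub_smul_le (bddAbove_range_abs_of_hasCompactSupport hFcont hFc) hFH hc₀ hc₁
  have := profileFn_le_of_inKs (F := F) (G := G) (h.smul_left hc₀)
  have : c * supNorm (F - H) ≤ supNorm (F - H) :=
    mul_le_of_le_one_left (supNorm_nonneg _) hc₁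
  linarith

lemma profileFn_mul_le_min (hs : 0 ≤ s) {c : ℝ} (hc₀ : 0 ≤ c) (hc₁ : c ≤ 1)
    (hF : P.IsSmooth F) (hFc : HasCompactSupport F) (hG : P.IsSmooth G)
    (hGc : HasCompactSupport G) :
    profileFn P F G (c * s) ≤ profileFn P F G s + (1 - c) * min (supNorm F) (supNorm G) := by
  rw [mul_min_of_nonneg _ _ (sub_nonneg.2 hc₁), ← min_add_add_left]
  refine le_min (profileFn_mul_le hs hc₀ hc₁ hF hFc) ?_
  simpa only [profileFn_comm P F G] using profileFn_mul_le hs hc₀ hc₁ hG hGc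

lemma mul_profileFn_le_add (hs : 0 < s) (ht : 0 < t)
    (hF : P.IsSmooth F) (hFc : HasCompactSupport F) (hG : P.IsSmooth G)
    (hGc : HasCompactSupport G) :
    s * profileFn P F G s ≤
      t * profileFn P F G t + min (supNorm F) (supNorm G) * |s - t| := by
  set m := min (supNorm F) (supNorm G)
  have hρt := profileFn_nonneg (P := P) (F := F) (G := G) t
  rcases le_total t s with hts | hst
  · have hρ : profileFn P F G t ≤ m := profileFn_le_min ht.le hF hFc hG hGc
    calc s * profileFn P F G s ≤ s * profileFn P F G t :=
          mul_le_mul_of_nonneg_left (profileFn_anti ht.le hts hF hFc) hs.le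
      _ = t * profileFn P F G t + (s - t) * profileFn P F G t := by ring
      _ ≤ t * profileFn P F G t + m * |s - t| := by
          rw [abs_of_nonneg (sub_nonneg.2 hts), mul_comm m]
          gcongr
  · have hc₁ : s / t ≤ 1 := div_le_one_of_le₀ hst ht.le
    have hρ := profileFn_mul_le_min (P := P) ht.le (div_nonneg hs.le ht.le) hc₁ hF hFc hG hGc
    rw [div_mul_cancel₀ s ht.ne'] at hρ
    calc s * profileFn P F G s ≤ s * (profileFn P F G t + (1 - s / t) * m) :=
          mul_le_mul_of_nonneg_left hρ hs.le
      _ = s * profileFn P F G t + s / t * ((t - s) * m) := by field_simp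
      _ ≤ t * profileFn P F G t + (t - s) * m := by
          have : 0 ≤ (t - s) * m := mul_nonneg (sub_nonneg.2 hst)
            (le_min (supNorm_nonneg F) (supNorm_nonneg G))
          exact add_le_add (mul_le_mul_of_nonneg_right hst hρt) (mul_le_of_le_one_left this hc₁)
      _ = t * profileFn P F G t + m * |s - t| := by
          rw [abs_sub_comm, abs_of_nonneg (sub_nonneg.2 hst), mul_comm m]

lemma abs_mul_profileFn_sub_le (hs : 0 < s) (ht : 0 < t)
    (hF : P.IsSmooth F) (hFc : HasCompactSupport F) (hG : P.IsSmooth G)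
    (hGc : HasCompactSupport G) :
    |s * profileFn P F G s - t * profileFn P F G t| ≤ min (supNorm F) (supNorm G) * |s - t| := by
  have hst := mul_profileFn_le_add hs ht hF hFc hG hGc
  have hts := mul_profileFn_le_add ht hs hF hFc hG hGc
  rw [abs_sub_comm t] at hts
  exact abs_sub_le_iff.2 ⟨by linarith, by linarith⟩

lemma continuousOn_profileFn (hF : P.IsSmooth F) (hFc : HasCompactSupport F)
    (hG : P.IsSmooth G) (hGc : HasCompactSupport G) :
    ContinuousOn (profileFn P F G) (Ioi 0) := by
  have hLip : LipschitzOnWith _ (fun s => s * profileFn P F G s) (Ioi 0) :=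
    LipschitzOnWith.of_le_add_mul' _ fun s hs t ht => by
      simpa only [Real.dist_eq] using mul_profileFn_le_add hs ht hF hFc hG hGc
  refine (hLip.continuousOn.div continuousOn_id fun s hs => hs.ne').congr fun s hs => ?_
  exact (mul_div_cancel_left₀ _ (ne_of_gt hs)).symm

end Profile

/-- For smooth compactly supported `F, G`, the function
`s ↦ s·ρ_{F,G}(s)` is Lipschitz on `(0,∞)` with Lipschitz constant
`3·min(‖F‖_∞, ‖G‖_∞)`; in particular `ρ_{F,G}` is continuous on `(0,∞)`. -/
theorem profile_mul_id_lipschitz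
    {M : Type*} [TopologicalSpace M] (P : PoissonManifold M)
    (F G : M → ℝ) (hF : P.IsSmooth F) (hFc : HasCompactSupport F)
    (hG : P.IsSmooth G) (hGc : HasCompactSupport G) :
    (∀ s ∈ Ioi (0:ℝ), ∀ t ∈ Ioi (0:ℝ),
      |s * profileFn P F G s - t * profileFn P F G t|
        ≤ 3 * min (supNorm F) (supNorm G) * |s - t|)
    ∧ ContinuousOn (profileFn P F G) (Ioi (0:ℝ)) := by
  refine ⟨fun s hs t ht => (abs_mul_profileFn_sub_le hs ht hF hFc hG hGc).trans ?_,
    continuousOn_profileFn hF hFc hG hGc⟩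
  have := le_min (supNorm_nonneg F) (supNorm_nonneg G)
  gcongr
  linarith
end

section
/- Let $\zeta : C(M) \to \mathbb{R}$ be a symplectic quasi-state on a closed symplectic manifold $(M,\omega)$ satisfying the PB-inequality with constant $K$: $|\zeta(F+G) - \zeta(F) - \zeta(G)| \leq \sqrt{K\|\{F,G\}\|}$ for all $F, G$. Let $X, Y, Z$ be closed $\zeta$-superheavy subsets with $X \cap Y \cap Z = \emptyset$. Then for any smooth functions $F, G$ with $F|_X \leq 0$, $G|_Y \leq 0$, $(F+G)|_Z \geq 1$, one has $\|\{F,G\}\| \geq 1/K$; i.e. $pb_3(X,Y,Z) \geq 1/K$. -/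
/-
Superheaviness evaluates ζ on each set separately: ζ(F) ≤ 0, ζ(G) ≤ 0 and ζ(F + G) ≥ 1, so the
defect ζ(F + G) - ζ(F) - ζ(G) of additivity is at least 1. The PB-inequality bounds this defect
by √(K ‖{F, G}‖), whence K ‖{F, G}‖ ≥ 1.
-/

open Set

/-- A symplectic quasi-state on a closed symplectic manifold: a normalized, positive
functional on continuous functions which is linear on Poisson-commutative subspaces. -/
structure QuasiState {M : Type*} [TopologicalSpace M] (P : PoissonManifold M) where
  val : (M → ℝ) → ℝ
  normalized : val (fun _ => 1) = 1
  positive : ∀ F : M → ℝ, Continuous F → (∀ x, 0 ≤ F x) → 0 ≤ val F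
  monotone : ∀ F G : M → ℝ, Continuous F → Continuous G →
    (∀ x, F x ≤ G x) → val F ≤ val G
  quasi_additive : ∀ F G : M → ℝ, P.IsSmooth F → P.IsSmooth G →
    P.bracket F G = 0 → val (F + G) = val F + val G
  homogeneous : ∀ (c : ℝ) (F : M → ℝ), Continuous F → val (c • F) = c * val F

/-- A closed set `X` is superheavy for the quasi-state `ζ`: `ζ(F) ≥ c` whenever
`F ≥ c` on `X`, and `ζ(F) ≤ c` whenever `F ≤ c` on `X`. -/
def Superheavy {M : Type*} [TopologicalSpace M] {P : PoissonManifold M}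
    (zeta : QuasiState P) (X : Set M) : Prop :=
  (∀ (F : M → ℝ), Continuous F → ∀ c : ℝ, (∀ x ∈ X, c ≤ F x) → c ≤ zeta.val F) ∧
  (∀ (F : M → ℝ), Continuous F → ∀ c : ℝ, (∀ x ∈ X, F x ≤ c) → zeta.val F ≤ c)

theorem Superheavy.one_le_val_add_sub_val_sub_val {M : Type*} [TopologicalSpace M]
    {P : PoissonManifold M} {zeta : QuasiState P} {X Y Z : Set M}
    (hXs : Superheavy zeta X) (hYs : Superheavy zeta Y) (hZs : Superheavy zeta Z)
    {F G : M → ℝ} (hF : Continuous F) (hG : Continuous G)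
    (hFX : ∀ x ∈ X, F x ≤ 0) (hGY : ∀ x ∈ Y, G x ≤ 0) (hFGZ : ∀ x ∈ Z, 1 ≤ F x + G x) :
    1 ≤ zeta.val (F + G) - zeta.val F - zeta.val G := by
  have hFval : zeta.val F ≤ 0 := hXs.2 F hF 0 hFX
  have hGval : zeta.val G ≤ 0 := hYs.2 G hG 0 hGY
  have hFGval : 1 ≤ zeta.val (F + G) := hZs.1 (F + G) (hF.add hG) 1 hFGZ
  linarith

theorem one_div_le_of_one_le_sqrt_mul {K s : ℝ} (hK : 0 < K) (h : 1 ≤ Real.sqrt (K * s)) :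
    1 / K ≤ s := by
  rw [div_le_iff₀ hK, mul_comm]
  exact Real.one_le_sqrt.mp h

theorem pb3_ge_of_superheavy_triple_general
    {M : Type*} [TopologicalSpace M] (P : PoissonManifold M)
    (zeta : QuasiState P) (K : ℝ) (hK : 0 < K)
    (hPB : ∀ F G : M → ℝ, P.IsSmooth F → P.IsSmooth G →
      |zeta.val (F + G) - zeta.val F - zeta.val G|
        ≤ Real.sqrt (K * supNorm (P.bracket F G)))
    (X Y Z : Set M)
    (hXs : Superheavy zeta X) (hYs : Superheavy zeta Y) (hZs : Superheavy zeta Z)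
    (F G : M → ℝ) (hF : P.IsSmooth F) (hG : P.IsSmooth G)
    (hFX : ∀ x ∈ X, F x ≤ 0) (hGY : ∀ x ∈ Y, G x ≤ 0)
    (hFGZ : ∀ x ∈ Z, 1 ≤ F x + G x) :
    1 / K ≤ supNorm (P.bracket F G) := by
  apply one_div_le_of_one_le_sqrt_mul hK
  calc 1 ≤ zeta.val (F + G) - zeta.val F - zeta.val G :=
        hXs.one_le_val_add_sub_val_sub_val hYs hZs (P.isSmooth_continuous hF)
          (P.isSmooth_continuous hG) hFX hGY hFGZ
    _ ≤ |zeta.val (F + G) - zeta.val F - zeta.val G| := le_abs_self _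
    _ ≤ Real.sqrt (K * supNorm (P.bracket F G)) := hPB F G hF hG

/-- If a closed symplectic manifold admits a symplectic quasi-state `ζ`
satisfying the PB-inequality with constant `K`, and `X, Y, Z` are closed `ζ`-superheavy
sets with `X ∩ Y ∩ Z = ∅`, then any smooth `F, G` with `F ≤ 0` on `X`, `G ≤ 0` on `Y`,
`F + G ≥ 1` on `Z` satisfy `‖{F,G}‖_∞ ≥ 1/K`; i.e. `pb₃(X,Y,Z) ≥ 1/K`. -/
theorem pb3_ge_of_superheavy_triple
    {M : Type*} [TopologicalSpace M] [CompactSpace M] (P : PoissonManifold M)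
    (zeta : QuasiState P) (K : ℝ) (hK : 0 < K)
    (hPB : ∀ F G : M → ℝ, P.IsSmooth F → P.IsSmooth G →
      |zeta.val (F + G) - zeta.val F - zeta.val G|
        ≤ Real.sqrt (K * supNorm (P.bracket F G)))
    (X Y Z : Set M) (hX : IsClosed X) (hY : IsClosed Y) (hZ : IsClosed Z)
    (hXs : Superheavy zeta X) (hYs : Superheavy zeta Y) (hZs : Superheavy zeta Z)
    (hXYZ : X ∩ Y ∩ Z = ∅)
    (F G : M → ℝ) (hF : P.IsSmooth F) (hG : P.IsSmooth G)
    (hFX : ∀ x ∈ X, F x ≤ 0) (hGY : ∀ x ∈ Y, G x ≤ 0)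
    (hFGZ : ∀ x ∈ Z, 1 ≤ F x + G x) :
    1 / K ≤ supNorm (P.bracket F G) :=
  pb3_ge_of_superheavy_triple_general P zeta K hK hPB X Y Z hXs hYs hZs F G hF hG hFX hGY hFGZ
end

section
/- Let $\zeta$ be a symplectic quasi-state on a closed symplectic manifold satisfying the PB-inequality with constant $K$. Let $X_0, X_1, Y_0, Y_1$ be closed subsets with $X_0 \cap X_1 = Y_0 \cap Y_1 = \emptyset$ such that $X_0 \cup Y_0$, $Y_0 \cup X_1$, $X_1 \cup Y_1$, $Y_1 \cup X_0$ are all $\zeta$-superheavy. Then for every pair of smooth functions $F, G : M \to [0,1]$ with $F = 0$ on a neighborhood of $X_0$, $F = 1$ on a neighborhood of $X_1$, $G = 0$ on a neighborhood of $Y_0$, $G = 1$ on a neighborhood of $Y_1$, one has $\|\{F,G\}\| \geq 1/(4K)$. -/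
open Set

/-! The four products `F G`, `G (1 - F)`, `(1 - F) (1 - G)`, `(1 - G) F` add up to `1`, and each
vanishes on one of the four superheavy sets, so each has `ζ`-value `0`. Since `F G` Poisson-commutes
with `1 - F G`, the sum of the last three has `ζ`-value `1`. Splitting this sum with the
PB-inequality, first as `(1 - F) + (1 - G) F` and then `1 - F` as `G (1 - F) + (1 - F) (1 - G)`,
changes `ζ` by at most `√(K ‖{F,G}‖)` each time, because the two brackets involved are
`F {F,G}` and `(1 - F) {F,G}`. Hence `1 ≤ 2 √(K ‖{F,G}‖)`. -/

namespace PoissonManifold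

variable {M : Type*} [TopologicalSpace M] (P : PoissonManifold M)

lemma bracket_one_left (g : M → ℝ) : P.bracket 1 g = 0 := by
  have h := P.bracket_leibniz 1 1 g
  rw [one_mul, one_mul] at h
  exact add_eq_left.mp h.symm

lemma bracket_one_right (f : M → ℝ) : P.bracket f 1 = 0 := by
  rw [P.bracket_antisymm, bracket_one_left, neg_zero]

lemma bracket_self (f : M → ℝ) : P.bracket f f = 0 :=
  self_eq_neg.mp (P.bracket_antisymm f f)

lemma bracket_neg_left (f g : M → ℝ) : P.bracket (-f) g = -P.bracket f g := by
  simpa only [neg_one_smul] using P.bracket_smul_left (-1) f g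

lemma bracket_sub_left (f g h : M → ℝ) :
    P.bracket (f - g) h = P.bracket f h - P.bracket g h := by
  rw [sub_eq_add_neg, P.bracket_add_left, bracket_neg_left, ← sub_eq_add_neg]

lemma bracket_sub_right (f g h : M → ℝ) :
    P.bracket f (g - h) = P.bracket f g - P.bracket f h := by
  rw [P.bracket_antisymm, bracket_sub_left, P.bracket_antisymm g, P.bracket_antisymm h]
  abel

lemma bracket_mul_right (f g h : M → ℝ) :
    P.bracket f (g * h) = g * P.bracket f h + h * P.bracket f g := by
  rw [P.bracket_antisymm, P.bracket_leibniz, P.bracket_antisymm g, P.bracket_antisymm h]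
  ring

lemma bracket_mul_one_sub_mul_one_sub (f g : M → ℝ) :
    P.bracket (g * (1 - f)) ((1 - f) * (1 - g)) = (1 - f) * P.bracket f g := by
  simp only [bracket_leibniz, bracket_mul_right, bracket_sub_left, bracket_sub_right,
    bracket_one_left, bracket_one_right, bracket_self, P.bracket_antisymm g f]
  ring

lemma bracket_one_sub_mul (f g : M → ℝ) :
    P.bracket (1 - f) ((1 - g) * f) = f * P.bracket f g := by
  simp only [bracket_mul_right, bracket_sub_left, bracket_sub_right, bracket_one_left,
    bracket_one_right, bracket_self]
  ring

lemma isSmooth_sub {f g : M → ℝ} (hf : P.IsSmooth f) (hg : P.IsSmooth g) :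
    P.IsSmooth (f - g) := by
  rw [sub_eq_add_neg, ← neg_one_smul ℝ g]
  exact P.isSmooth_add hf (P.isSmooth_smul (-1) hg)

lemma isSmooth_one_sub {f : M → ℝ} (hf : P.IsSmooth f) : P.IsSmooth (1 - f) :=
  P.isSmooth_sub (P.isSmooth_const 1) hf

end PoissonManifold

lemma supNorm_mul_le_of_abs_le_one {M : Type*} [TopologicalSpace M] [CompactSpace M]
    {f g : M → ℝ} (hg : Continuous g) (hf : ∀ x, |f x| ≤ 1) : supNorm (f * g) ≤ supNorm g :=
  ciSup_mono (isCompact_range hg.abs).bddAbove fun x => by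
    rw [Pi.mul_apply, abs_mul]
    exact mul_le_of_le_one_left (abs_nonneg _) (hf x)

section QuasiState

variable {M : Type*} [TopologicalSpace M] {P : PoissonManifold M}

lemma Superheavy.val_mul_eq_zero {zeta : QuasiState P} {X Y : Set M}
    (h : Superheavy zeta (X ∪ Y)) {f g : M → ℝ} (hfg : Continuous (f * g))
    (hf : ∀ x ∈ X, f x = 0) (hg : ∀ x ∈ Y, g x = 0) : zeta.val (f * g) = 0 := by
  have hvanish : ∀ x ∈ X ∪ Y, (f * g) x = 0 := by
    rintro x (hx | hx)
    · simp [hf x hx]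
    · simp [hg x hx]
  exact le_antisymm (h.2 _ hfg 0 fun x hx => (hvanish x hx).le)
    (h.1 _ hfg 0 fun x hx => (hvanish x hx).ge)

lemma QuasiState.val_one_sub (zeta : QuasiState P) {f : M → ℝ} (hf : P.IsSmooth f) :
    zeta.val (1 - f) = 1 - zeta.val f := by
  have hcomm : P.bracket f (1 - f) = 0 := by
    rw [P.bracket_sub_right, P.bracket_one_right, P.bracket_self, sub_zero]
  have h := zeta.quasi_additive f (1 - f) hf (P.isSmooth_one_sub hf) hcomm
  rw [add_sub_cancel, show zeta.val 1 = 1 from zeta.normalized] at h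
  linarith

def QuasiState.SatisfiesPB (zeta : QuasiState P) (K : ℝ) : Prop :=
  ∀ F G : M → ℝ, P.IsSmooth F → P.IsSmooth G →
    |zeta.val (F + G) - zeta.val F - zeta.val G| ≤ Real.sqrt (K * supNorm (P.bracket F G))

lemma QuasiState.SatisfiesPB.one_div_four_mul_le {zeta : QuasiState P} {K : ℝ}
    (hPB : zeta.SatisfiesPB K) (hK : 0 < K) {u v w : M → ℝ}
    (hu : P.IsSmooth u) (hv : P.IsSmooth v) (hw : P.IsSmooth w)
    (hζu : zeta.val u = 0) (hζv : zeta.val v = 0) (hζw : zeta.val w = 0)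
    (hζ : zeta.val (u + v + w) = 1) {N : ℝ}
    (huv : supNorm (P.bracket u v) ≤ N) (huvw : supNorm (P.bracket (u + v) w) ≤ N) :
    1 / (4 * K) ≤ N := by
  have hsqrt {f g : M → ℝ} (h : supNorm (P.bracket f g) ≤ N) :
      √(K * supNorm (P.bracket f g)) ≤ √(K * N) :=
    Real.sqrt_le_sqrt (mul_le_mul_of_nonneg_left h hK.le)
  have h₁ := (hPB u v hu hv).trans (hsqrt huv)
  have h₂ := (hPB (u + v) w (P.isSmooth_add hu hv) hw).trans (hsqrt huvw)
  rw [hζu, hζv] at h₁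
  rw [hζ, hζw] at h₂
  have hhalf : 1 / 2 ≤ √(K * N) := by
    rw [abs_le] at h₁ h₂
    linarith [h₁.2, h₂.1]
  have hquarter : (1 / 2) ^ 2 ≤ K * N := (Real.le_sqrt' (by norm_num)).mp hhalf
  rw [div_le_iff₀ (by positivity)]
  linarith

end QuasiState

theorem pb4_ge_of_superheavy_quadruple_general
    {M : Type*} [TopologicalSpace M] [CompactSpace M] (P : PoissonManifold M)
    (zeta : QuasiState P) (K : ℝ) (hK : 0 < K)
    (hPB : ∀ F G : M → ℝ, P.IsSmooth F → P.IsSmooth G →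
      |zeta.val (F + G) - zeta.val F - zeta.val G|
        ≤ Real.sqrt (K * supNorm (P.bracket F G)))
    (X0 X1 Y0 Y1 : Set M)
    (h1 : Superheavy zeta (X0 ∪ Y0)) (h2 : Superheavy zeta (Y0 ∪ X1))
    (h3 : Superheavy zeta (X1 ∪ Y1)) (h4 : Superheavy zeta (Y1 ∪ X0))
    (F G : M → ℝ) (hF : P.IsSmooth F) (hG : P.IsSmooth G)
    (hF01 : ∀ x, F x ∈ Icc (0:ℝ) 1)
    (hFX0 : ∃ U, IsOpen U ∧ X0 ⊆ U ∧ ∀ x ∈ U, F x = 0)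
    (hFX1 : ∃ U, IsOpen U ∧ X1 ⊆ U ∧ ∀ x ∈ U, F x = 1)
    (hGY0 : ∃ U, IsOpen U ∧ Y0 ⊆ U ∧ ∀ x ∈ U, G x = 0)
    (hGY1 : ∃ U, IsOpen U ∧ Y1 ⊆ U ∧ ∀ x ∈ U, G x = 1) :
    1 / (4 * K) ≤ supNorm (P.bracket F G) := by
  obtain ⟨U0, -, hXU0, hU0⟩ := hFX0
  obtain ⟨U1, -, hXU1, hU1⟩ := hFX1
  obtain ⟨V0, -, hYV0, hV0⟩ := hGY0
  obtain ⟨V1, -, hYV1, hV1⟩ := hGY1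
  have hF' := P.isSmooth_one_sub hF
  have hG' := P.isSmooth_one_sub hG
  have cont_mul {f g : M → ℝ} (hf : P.IsSmooth f) (hg : P.IsSmooth g) :=
    P.isSmooth_continuous (P.isSmooth_mul hf hg)
  have hζ1 := h1.val_mul_eq_zero (cont_mul hF hG) (fun x hx => hU0 x (hXU0 hx))
    (fun x hx => hV0 x (hYV0 hx))
  have hζ2 := h2.val_mul_eq_zero (cont_mul hG hF') (fun x hx => hV0 x (hYV0 hx))
    (fun x hx => by simp [hU1 x (hXU1 hx)])
  have hζ3 := h3.val_mul_eq_zero (cont_mul hF' hG') (fun x hx => by simp [hU1 x (hXU1 hx)])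
    (fun x hx => by simp [hV1 x (hYV1 hx)])
  have hζ4 := h4.val_mul_eq_zero (cont_mul hG' hF) (fun x hx => by simp [hV1 x (hYV1 hx)])
    (fun x hx => hU0 x (hXU0 hx))
  have hsum : zeta.val (G * (1 - F) + (1 - F) * (1 - G) + (1 - G) * F) = 1 := by
    rw [show G * (1 - F) + (1 - F) * (1 - G) + (1 - G) * F = 1 - F * G by ring,
      zeta.val_one_sub (P.isSmooth_mul hF hG), hζ1, sub_zero]
  have hB := P.isSmooth_continuous (P.isSmooth_bracket hF hG)
  have hFabs x : |F x| ≤ 1 := abs_le.mpr ⟨by linarith [(hF01 x).1], (hF01 x).2⟩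
  have hFabs' x : |(1 - F) x| ≤ 1 :=
    abs_le.mpr ⟨by simp only [Pi.sub_apply, Pi.one_apply]; linarith [(hF01 x).2],
      by simp [(hF01 x).1]⟩
  refine QuasiState.SatisfiesPB.one_div_four_mul_le hPB hK (P.isSmooth_mul hG hF')
    (P.isSmooth_mul hF' hG') (P.isSmooth_mul hG' hF) hζ2 hζ3 hζ4 hsum ?_ ?_
  · rw [P.bracket_mul_one_sub_mul_one_sub]
    exact supNorm_mul_le_of_abs_le_one hB hFabs'
  · rw [show G * (1 - F) + (1 - F) * (1 - G) = 1 - F by ring, P.bracket_one_sub_mul]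
    exact supNorm_mul_le_of_abs_le_one hB hFabs

/-- Let `ζ` be a symplectic quasi-state on a closed symplectic manifold
satisfying the PB-inequality with constant `K`. If `X₀ ∪ Y₀`, `Y₀ ∪ X₁`, `X₁ ∪ Y₁`,
`Y₁ ∪ X₀` are all superheavy and `X₀ ∩ X₁ = Y₀ ∩ Y₁ = ∅`, then for any smooth
`F, G : M → [0,1]` with `F = 0` near `X₀`, `F = 1` near `X₁`, `G = 0` near `Y₀`,
`G = 1` near `Y₁`, one has `‖{F,G}‖_∞ ≥ 1/(4K)`. -/
theorem pb4_ge_of_superheavy_quadruple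
    {M : Type*} [TopologicalSpace M] [CompactSpace M] (P : PoissonManifold M)
    (zeta : QuasiState P) (K : ℝ) (hK : 0 < K)
    (hPB : ∀ F G : M → ℝ, P.IsSmooth F → P.IsSmooth G →
      |zeta.val (F + G) - zeta.val F - zeta.val G|
        ≤ Real.sqrt (K * supNorm (P.bracket F G)))
    (X0 X1 Y0 Y1 : Set M)
    (hX0 : IsClosed X0) (hX1 : IsClosed X1) (hY0 : IsClosed Y0) (hY1 : IsClosed Y1)
    (hX : X0 ∩ X1 = ∅) (hY : Y0 ∩ Y1 = ∅)
    (h1 : Superheavy zeta (X0 ∪ Y0)) (h2 : Superheavy zeta (Y0 ∪ X1))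
    (h3 : Superheavy zeta (X1 ∪ Y1)) (h4 : Superheavy zeta (Y1 ∪ X0))
    (F G : M → ℝ) (hF : P.IsSmooth F) (hG : P.IsSmooth G)
    (hF01 : ∀ x, F x ∈ Icc (0:ℝ) 1) (hG01 : ∀ x, G x ∈ Icc (0:ℝ) 1)
    (hFX0 : ∃ U, IsOpen U ∧ X0 ⊆ U ∧ ∀ x ∈ U, F x = 0)
    (hFX1 : ∃ U, IsOpen U ∧ X1 ⊆ U ∧ ∀ x ∈ U, F x = 1)
    (hGY0 : ∃ U, IsOpen U ∧ Y0 ⊆ U ∧ ∀ x ∈ U, G x = 0)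
    (hGY1 : ∃ U, IsOpen U ∧ Y1 ⊆ U ∧ ∀ x ∈ U, G x = 1) :
    1 / (4 * K) ≤ supNorm (P.bracket F G) :=
  pb4_ge_of_superheavy_quadruple_general P zeta K hK hPB X0 X1 Y0 Y1 h1 h2 h3 h4 F G hF hG hF01 hFX0
    hFX1 hGY0 hGY1
end
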